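/- Let L : H → G be bounded linear with 0 < ‖L‖ ≤ 1, let γ > 0, let ρ ≥ 1, and let B be strictly positive on G. Then L ⊡_γ (ρB) = ρ(L ⊡_{γρ} B) ≼ ρ(L ⊡_γ B), where L ⊡_γ B = L* ∘ (B⁻¹ + γ(Id_G − L L*))⁻¹ ∘ L. -/

import Mathlib

open ContinuousLinearMap MeasureTheory

noncomputable section

variable {E : Type*} [NormedAddCommGroup E] [InnerProductSpace ℝ E] [CompleteSpace E]
variable {H G : Type*} [NormedAddCommGroup H] [InnerProductSpace ℝ H] [CompleteSpace H]
  [NormedAddCommGroup G] [InnerProductSpace ℝ G] [CompleteSpace G]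

/-- Löwner partial order: `A ≼ B` iff `B - A` is a positive operator. -/
def Loewner (A B : E →L[ℝ] E) : Prop := (B - A).IsPositive

/-- Strictly positive operators: `α • Id ≼ A` for some `α > 0`. -/
def StrictlyPos (A : E →L[ℝ] E) : Prop :=
  IsSelfAdjoint A ∧ ∃ α : ℝ, 0 < α ∧ Loewner (α • (1 : E →L[ℝ] E)) A

/-- Bounded below linear operator. -/
def BoundedBelow (L : H →L[ℝ] G) : Prop := ∃ β : ℝ, 0 < β ∧ ∀ x : H, β * ‖x‖ ≤ ‖L x‖

/-- Resolvent cocomposition `L ⊡_γ B = L* ∘ (B⁻¹ + γ(Id − L L*))⁻¹ ∘ L`. -/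
def rcc (L : H →L[ℝ] G) (γ : ℝ) (B : G →L[ℝ] G) : H →L[ℝ] H :=
  (adjoint L) ∘L (Ring.inverse (Ring.inverse B + γ • ((1 : G →L[ℝ] G) - L ∘L adjoint L))) ∘L L

/-- Resolvent composition `L ⊙_γ B = (L ⊡_{1/γ} B⁻¹)⁻¹`. -/
def rc (L : H →L[ℝ] G) (γ : ℝ) (B : G →L[ℝ] G) : H →L[ℝ] H :=
  Ring.inverse (rcc L (1/γ) (Ring.inverse B))

/-- Parallel composition `L* ▸ B = (L* ∘ B⁻¹ ∘ L)⁻¹`. -/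
def parallelComp (L : H →L[ℝ] G) (B : G →L[ℝ] G) : H →L[ℝ] H :=
  Ring.inverse ((adjoint L) ∘L (Ring.inverse B) ∘L L)

/-- `g(A,B) = inf {λ > 0 : A ≼ λ B}`. -/
def gThomp (A B : E →L[ℝ] E) : ℝ := sInf {l : ℝ | 0 < l ∧ Loewner A (l • B)}

/-- Thompson metric. -/
def dThomp (A B : E →L[ℝ] E) : ℝ := Real.log (max (gThomp A B) (gThomp B A))

/-- The (unique) positive square root of a positive operator. -/
def opSqrt (A : E →L[ℝ] E) : E →L[ℝ] E :=
  letI := Classical.propDecidable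
  if h : ∃ S : E →L[ℝ] E, S.IsPositive ∧ S * S = A then h.choose else 0

/-- Real power `A^t` of a strictly positive operator, `t ∈ (0,1)`, via the
Balakrishnan integral formula `A^t = (sin (π t)/π) ∫₀^∞ s^{t-1} A (A + s)⁻¹ ds`. -/
def opRpow (A : E →L[ℝ] E) (t : ℝ) : E →L[ℝ] E :=
  (Real.sin (Real.pi * t) / Real.pi) •
    ∫ s in Set.Ioi (0 : ℝ), s ^ (t - 1) • (A * Ring.inverse (A + s • (1 : E →L[ℝ] E)))

/-- Geometric mean `A # B = A^{1/2} (A^{-1/2} B A^{-1/2})^{1/2} A^{1/2}`. -/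
def geomMean (A B : E →L[ℝ] E) : E →L[ℝ] E :=
  opSqrt A * opSqrt (Ring.inverse (opSqrt A) * B * Ring.inverse (opSqrt A)) * opSqrt A

/-- `t`-weighted geometric mean `A #_t B = A^{1/2} (A^{-1/2} B A^{-1/2})^t A^{1/2}`. -/
def wGeomMean (t : ℝ) (A B : E →L[ℝ] E) : E →L[ℝ] E :=
  opSqrt A * opRpow (Ring.inverse (opSqrt A) * B * Ring.inverse (opSqrt A)) t * opSqrt A

/-!
With `Ψ = 1 - L L†` the operator inverted in `L ⊡_γ B` is `B⁻¹ + γ Ψ`, and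
`(ρ B)⁻¹ + γ Ψ = ρ⁻¹ (B⁻¹ + γ ρ Ψ)`, which gives the identity. For `‖L‖ ≤ 1` the operator `Ψ` is
positive, so `B⁻¹ + γ Ψ` increases with `γ`; operator inversion is antitone on invertible positive
operators (a Cauchy–Schwarz argument for the form `⟪A ·, ·⟫`), hence `γ ↦ L ⊡_γ B` decreases, and
`γ ≤ γ ρ` gives the inequality.
-/

open scoped Ring RealInnerProductSpace

theorem Ring.inverse_smul₀ {𝕜 R : Type*} [Field 𝕜] [Ring R] [Algebra 𝕜 R] {c : 𝕜} (hc : c ≠ 0)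
    (a : R) : (c • a)⁻¹ʳ = c⁻¹ • a⁻¹ʳ := by
  have hc' : IsUnit (algebraMap 𝕜 R c) := (IsUnit.mk0 c hc).map _
  have hinv : (algebraMap 𝕜 R c)⁻¹ʳ = algebraMap 𝕜 R c⁻¹ := by
    rw [← mul_one (algebraMap 𝕜 R c)⁻¹ʳ, Ring.inverse_mul_eq_iff_eq_mul _ _ _ hc', ← map_mul,
      mul_inv_cancel₀ hc, map_one]
  rw [Algebra.smul_def, Ring.inverse_mul (.inl hc'), hinv, ← Algebra.commutes, ← Algebra.smul_def]

namespace ContinuousLinearMap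

theorem apply_ringInverse_apply {R M : Type*} [Semiring R] [TopologicalSpace M]
    [AddCommMonoid M] [Module R M] {A : M →L[R] M} (hA : IsUnit A) (x : M) : A (A⁻¹ʳ x) = x :=
  DFunLike.congr_fun (Ring.mul_inverse_cancel A hA) x

theorem IsPositive.inner_sq_le {V : Type*} [NormedAddCommGroup V] [InnerProductSpace ℝ V]
    {T : V →L[ℝ] V} (hT : T.IsPositive) (x y : V) :
    ⟪T x, y⟫ ^ 2 ≤ ⟪T x, x⟫ * ⟪T y, y⟫ := by
  have hquad : ∀ t : ℝ, 0 ≤ ⟪T y, y⟫ * (t * t) + (2 * ⟪T x, y⟫) * t + ⟪T x, x⟫ := by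
    intro t
    have hexpand : ⟪T (x + t • y), x + t • y⟫ =
        ⟪T y, y⟫ * (t * t) + (2 * ⟪T x, y⟫) * t + ⟪T x, x⟫ := by
      simp only [map_add, map_smul, inner_add_left, inner_add_right, real_inner_smul_left,
        real_inner_smul_right, hT.inner_left_eq_inner_right y x, real_inner_comm (T x) y]
      ring
    exact hexpand ▸ hT.inner_nonneg_left _
  have hdiscr := discrim_le_zero hquad
  rw [discrim] at hdiscr
  linarith

theorem ringInverse_le_ringInverse {A C : E →L[ℝ] E} (hA : A.IsPositive) (hAu : IsUnit A)
    (hCu : IsUnit C) (h : A ≤ C) : C⁻¹ʳ ≤ A⁻¹ʳ := by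
  have hC : C.IsPositive := by simpa using hA.add h
  rw [le_def, isPositive_iff']
  refine ⟨hA.isSelfAdjoint.ringInverse.sub hC.isSelfAdjoint.ringInverse, fun x => ?_⟩
  set u := C⁻¹ʳ x
  set v := A⁻¹ʳ x
  have hCu' : C u = x := apply_ringInverse_apply hCu x
  have hAv : A v = x := apply_ringInverse_apply hAu x
  have hAC : ⟪A u, u⟫ ≤ ⟪u, x⟫ := by
    have := h.inner_nonneg_left u
    rw [sub_apply, inner_sub_left, hCu', real_inner_comm] at this
    linarith
  have hs : 0 ≤ ⟪v, x⟫ := by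
    have := hA.inner_nonneg_left v
    rwa [hAv, real_inner_comm] at this
  have hcs : ⟪u, x⟫ ^ 2 ≤ ⟪v, x⟫ * ⟪u, x⟫ :=
    calc ⟪u, x⟫ ^ 2 = ⟪A v, u⟫ ^ 2 := by rw [hAv, real_inner_comm]
      _ ≤ ⟪A v, v⟫ * ⟪A u, u⟫ := hA.inner_sq_le v u
      _ ≤ ⟪v, x⟫ * ⟪u, x⟫ := by rw [hAv, real_inner_comm]; gcongr
  rw [sub_apply, inner_sub_left, sub_nonneg]
  nlinarith

theorem isPositive_one_sub_comp_adjoint {L : H →L[ℝ] G} (hL : ‖L‖ ≤ 1) :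
    (1 - L ∘L adjoint L).IsPositive := by
  rw [isPositive_iff']
  refine ⟨.sub (.one _) (isPositive_self_comp_adjoint L).isSelfAdjoint, fun x => ?_⟩
  have hnorm : ‖adjoint L x‖ ^ 2 ≤ ‖x‖ ^ 2 := by
    gcongr
    calc ‖adjoint L x‖ ≤ ‖adjoint L‖ * ‖x‖ := le_opNorm _ _
      _ ≤ ‖x‖ := by rw [adjoint.norm_map]; exact mul_le_of_le_one_left (norm_nonneg x) hL
  rw [apply_norm_sq_eq_inner_adjoint_left, adjoint_adjoint] at hnorm
  simpa [inner_sub_left, real_inner_self_eq_norm_sq] using hnorm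

end ContinuousLinearMap

theorem strictlyPos_iff {A : E →L[ℝ] E} :
    StrictlyPos A ↔ IsSelfAdjoint A ∧ ∃ α, 0 < α ∧ ∀ x, α * ‖x‖ ^ 2 ≤ ⟪A x, x⟫ := by
  refine and_congr_right fun hA => exists_congr fun α => and_congr_right fun _ => ?_
  rw [Loewner, isPositive_iff']
  simp [hA.sub ((IsSelfAdjoint.all α).smul (.one _)), inner_sub_left, real_inner_smul_left]

namespace StrictlyPos

variable {A : E →L[ℝ] E}

theorem isPositive (hA : StrictlyPos A) : A.IsPositive := by
  obtain ⟨hsa, α, hα, hbound⟩ := strictlyPos_iff.1 hA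
  exact (isPositive_iff' A).2 ⟨hsa, fun x => le_trans (by positivity) (hbound x)⟩

theorem isUnit (hA : StrictlyPos A) : IsUnit A := by
  obtain ⟨-, α, hα, hbound⟩ := strictlyPos_iff.1 hA
  refine isUnit_of_forall_le_norm_inner_map A (c := ⟨α, hα.le⟩) hα fun x => ?_
  calc ‖x‖ ^ 2 * α = α * ‖x‖ ^ 2 := mul_comm _ _
    _ ≤ ⟪A x, x⟫ := hbound x
    _ ≤ ‖⟪A x, x⟫‖ := Real.le_norm_self _

theorem add_isPositive (hA : StrictlyPos A) {P : E →L[ℝ] E} (hP : P.IsPositive) :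
    StrictlyPos (A + P) := by
  obtain ⟨hsa, α, hα, hle⟩ := hA
  refine ⟨hsa.add hP.isSelfAdjoint, α, hα, ?_⟩
  rw [Loewner, add_sub_right_comm]
  exact hle.add hP

theorem ringInverse (hA : StrictlyPos A) : StrictlyPos A⁻¹ʳ := by
  obtain ⟨hsa, α, hα, hbound⟩ := strictlyPos_iff.1 hA
  refine strictlyPos_iff.2 ⟨hsa.ringInverse, α / (‖A‖ + 1) ^ 2, by positivity, fun x => ?_⟩
  set y := A⁻¹ʳ x
  have hAy : A y = x := apply_ringInverse_apply hA.isUnit x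
  have hx : ‖x‖ ≤ (‖A‖ + 1) * ‖y‖ :=
    hAy ▸ (le_opNorm A y).trans (by gcongr; linarith)
  calc α / (‖A‖ + 1) ^ 2 * ‖x‖ ^ 2 ≤ α / (‖A‖ + 1) ^ 2 * ((‖A‖ + 1) * ‖y‖) ^ 2 := by gcongr
    _ = α * ‖y‖ ^ 2 := by field_simp
    _ ≤ ⟪A y, y⟫ := hbound y
    _ = ⟪y, x⟫ := by rw [hAy, real_inner_comm]

end StrictlyPos

section ResolventCocomposition

variable (L : H →L[ℝ] G)

theorem rcc_smul (γ : ℝ) {ρ : ℝ} (hρ : ρ ≠ 0) (B : G →L[ℝ] G) :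
    rcc L γ (ρ • B) = ρ • rcc L (γ * ρ) B := by
  have hfactor : ρ⁻¹ • B⁻¹ʳ + γ • (1 - L ∘L adjoint L) =
      ρ⁻¹ • (B⁻¹ʳ + (γ * ρ) • (1 - L ∘L adjoint L)) := by
    rw [smul_add, smul_smul, mul_comm γ, inv_mul_cancel_left₀ hρ]
  rw [rcc, rcc, Ring.inverse_smul₀ hρ, hfactor, Ring.inverse_smul₀ (inv_ne_zero hρ), inv_inv,
    smul_comp, comp_smul]

theorem rcc_le_rcc_of_le {B : G →L[ℝ] G} (hB : StrictlyPos B) (hL : ‖L‖ ≤ 1) {γ γ' : ℝ}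
    (hγ : 0 ≤ γ) (hγγ' : γ ≤ γ') : rcc L γ' B ≤ rcc L γ B := by
  have hΨ := isPositive_one_sub_comp_adjoint hL
  have hpos : ∀ t : ℝ, 0 ≤ t → StrictlyPos (B⁻¹ʳ + t • (1 - L ∘L adjoint L)) :=
    fun t ht => hB.ringInverse.add_isPositive (hΨ.smul_of_nonneg ht)
  have hle : B⁻¹ʳ + γ • (1 - L ∘L adjoint L) ≤ B⁻¹ʳ + γ' • (1 - L ∘L adjoint L) := by
    rw [le_def, add_sub_add_left_eq_sub, ← sub_smul]
    exact hΨ.smul_of_nonneg (sub_nonneg.2 hγγ')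
  have hinv := ringInverse_le_ringInverse (hpos γ hγ).isPositive (hpos γ hγ).isUnit
    (hpos γ' (hγ.trans hγγ')).isUnit hle
  rw [le_def, rcc, rcc, ← comp_sub, ← sub_comp]
  exact hinv.adjoint_conj L

end ResolventCocomposition

theorem rcc_scaling_general (L : H →L[ℝ] G) (hL1 : ‖L‖ ≤ 1)
    (γ : ℝ) (hγ : 0 < γ) (ρ : ℝ) (hρ : 1 ≤ ρ)
    (B : G →L[ℝ] G) (hB : StrictlyPos B) :
    rcc L γ (ρ • B) = ρ • rcc L (γ * ρ) B ∧
      Loewner (rcc L γ (ρ • B)) (ρ • rcc L γ B) := by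
  have hρ0 : 0 < ρ := zero_lt_one.trans_le hρ
  refine ⟨rcc_smul L γ hρ0.ne' B, ?_⟩
  rw [Loewner, rcc_smul L γ hρ0.ne' B, ← smul_sub]
  exact (rcc_le_rcc_of_le L hB hL1 hγ.le (le_mul_of_one_le_right hγ.le hρ)).smul_of_nonneg hρ0.le

theorem rcc_scaling (L : H →L[ℝ] G) (hL0 : 0 < ‖L‖) (hL1 : ‖L‖ ≤ 1)
    (γ : ℝ) (hγ : 0 < γ) (ρ : ℝ) (hρ : 1 ≤ ρ)
    (B : G →L[ℝ] G) (hB : StrictlyPos B) :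
    rcc L γ (ρ • B) = ρ • rcc L (γ * ρ) B ∧
      Loewner (rcc L γ (ρ • B)) (ρ • rcc L γ B) :=
  rcc_scaling_general L hL1 γ hγ ρ hρ B hB

end
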